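/- arXiv:1209.4096 — 6 statements merged into one kernel-verified Lean document; each statement's English description precedes it below -/
import Mathlib

section
/- Let φ : (0,∞) → (0,1] be nonincreasing and satisfy φ(a)φ(b) ≤ c φ(a+b) for all a, b > 1 and some constant c > 0. Let α ∈ (0,2), d ≥ 1. Then there exists a constant c₃ > 0 such that for all x, y ∈ ℝ^d with |x-y| > 2, ∫_{|x-z|≥1, |y-z|≥1} φ(|y-z|)|y-z|^{-(α+d)} φ(|z-x|)|z-x|^{-(α+d)} dz ≤ c₃ φ(|y-x|) |y-x|^{-(α+d)}. -/
open MeasureTheory Set Metric Module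

section Aux

variable {d : ℕ}

lemma aux_intOn (d : ℕ) (q : ℝ) (hdq : (d : ℝ) < q) :
    IntegrableOn (fun w : EuclideanSpace ℝ (Fin d) => ‖w‖ ^ (-q))
      {w : EuclideanSpace ℝ (Fin d) | 1 ≤ ‖w‖} volume := by
  have hq0 : 0 < q := lt_of_le_of_lt (Nat.cast_nonneg d) hdq
  have hbase : Integrable (fun w : EuclideanSpace ℝ (Fin d) => (1 + ‖w‖) ^ (-q)) volume := by
    apply integrable_one_add_norm
    rwa [finrank_euclideanSpace_fin]
  have hsetm : MeasurableSet {w : EuclideanSpace ℝ (Fin d) | 1 ≤ ‖w‖} :=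
    (isClosed_le continuous_const continuous_norm).measurableSet
  have hmeas : Measurable fun w : EuclideanSpace ℝ (Fin d) => ‖w‖ ^ (-q) :=
    measurable_norm.pow measurable_const
  refine Integrable.mono' ((hbase.const_mul ((2:ℝ) ^ q)).restrict) hmeas.aestronglyMeasurable ?_
  filter_upwards [ae_restrict_mem hsetm] with w hw
  have hw1 : (1:ℝ) ≤ ‖w‖ := hw
  have hnn : 0 ≤ ‖w‖ ^ (-q) := Real.rpow_nonneg (norm_nonneg w) _
  rw [Real.norm_eq_abs, abs_of_nonneg hnn]
  have h3 : (1 + ‖w‖) / 2 ≤ ‖w‖ := by linarith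
  have h4 : ((1 + ‖w‖) / 2 : ℝ) ^ (-q) = 2 ^ q * (1 + ‖w‖) ^ (-q) := by
    rw [Real.div_rpow (by positivity) (by norm_num), Real.rpow_neg (by norm_num : (0:ℝ) ≤ 2)]
    field_simp
  calc ‖w‖ ^ (-q) ≤ ((1 + ‖w‖) / 2) ^ (-q) :=
        Real.rpow_le_rpow_of_nonpos (by positivity) h3 (neg_nonpos.mpr hq0.le)
    _ = 2 ^ q * (1 + ‖w‖) ^ (-q) := h4

lemma aux_ind (q : ℝ) (y : EuclideanSpace ℝ (Fin d)) (z : EuclideanSpace ℝ (Fin d)) :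
    Set.indicator {w : EuclideanSpace ℝ (Fin d) | 1 ≤ ‖w‖} (fun w => ‖w‖ ^ (-q)) (z - y)
      = Set.indicator {z : EuclideanSpace ℝ (Fin d) | 1 ≤ dist y z}
          (fun z => dist y z ^ (-q)) z := by
  have hdy : dist y z = ‖z - y‖ := by rw [dist_comm, dist_eq_norm]
  simp only [Set.indicator_apply, Set.mem_setOf_eq, hdy]

lemma aux_setm (y : EuclideanSpace ℝ (Fin d)) :
    MeasurableSet {z : EuclideanSpace ℝ (Fin d) | 1 ≤ dist y z} :=
  (isClosed_le continuous_const (continuous_const.dist continuous_id)).measurableSet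

lemma aux_transl (d : ℕ) (q : ℝ)
    (hbase : IntegrableOn (fun w : EuclideanSpace ℝ (Fin d) => ‖w‖ ^ (-q))
      {w : EuclideanSpace ℝ (Fin d) | 1 ≤ ‖w‖} volume)
    (y : EuclideanSpace ℝ (Fin d)) :
    IntegrableOn (fun z : EuclideanSpace ℝ (Fin d) => dist y z ^ (-q))
      {z : EuclideanSpace ℝ (Fin d) | 1 ≤ dist y z} volume ∧
    (∫ z in {z : EuclideanSpace ℝ (Fin d) | 1 ≤ dist y z}, dist y z ^ (-q))
      = ∫ w in {w : EuclideanSpace ℝ (Fin d) | 1 ≤ ‖w‖}, ‖w‖ ^ (-q) := by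
  have hsetm : MeasurableSet {w : EuclideanSpace ℝ (Fin d) | 1 ≤ ‖w‖} :=
    (isClosed_le continuous_const continuous_norm).measurableSet
  have hind : Integrable (Set.indicator {w : EuclideanSpace ℝ (Fin d) | 1 ≤ ‖w‖}
      (fun w => ‖w‖ ^ (-q))) volume := (integrable_indicator_iff hsetm).2 hbase
  have hcomp := hind.comp_sub_right y
  have heq : (fun z => Set.indicator {w : EuclideanSpace ℝ (Fin d) | 1 ≤ ‖w‖}
      (fun w => ‖w‖ ^ (-q)) (z - y))
      = Set.indicator {z : EuclideanSpace ℝ (Fin d) | 1 ≤ dist y z}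
          (fun z => dist y z ^ (-q)) := funext fun z => aux_ind q y z
  rw [heq] at hcomp
  constructor
  · exact (integrable_indicator_iff (aux_setm y)).1 hcomp
  · rw [← integral_indicator (aux_setm y), ← heq,
      integral_sub_right_eq_self _ y, integral_indicator hsetm]

end Aux

theorem stmt_4 (d : ℕ) (hd : 1 ≤ d) (α : ℝ) (hα : 0 < α) (hα2 : α < 2)
    (φ : ℝ → ℝ) (c : ℝ) (hc : 0 < c)
    (hφpos : ∀ s, 0 < s → 0 < φ s) (hφle : ∀ s, 0 < s → φ s ≤ 1)
    (hφmono : AntitoneOn φ (Set.Ioi (0 : ℝ)))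
    (hφmul : ∀ a b : ℝ, 1 < a → 1 < b → φ a * φ b ≤ c * φ (a + b)) :
    ∃ c₃ : ℝ, 0 < c₃ ∧ ∀ x y : EuclideanSpace ℝ (Fin d), dist x y > 2 →
      ∫ z in {z : EuclideanSpace ℝ (Fin d) | 1 ≤ dist x z ∧ 1 ≤ dist y z},
          φ (dist y z) * dist y z ^ (-(α + d)) * (φ (dist z x) * dist z x ^ (-(α + d)))
        ≤ c₃ * (φ (dist y x) * dist y x ^ (-(α + d))) := by
  classical
  haveI : Nontrivial (EuclideanSpace ℝ (Fin d)) := by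
    refine nontrivial_of_ne (EuclideanSpace.single ⟨0, hd⟩ (1:ℝ)) 0 fun h => ?_
    have h2 := congrArg norm h
    rw [EuclideanSpace.norm_single, norm_zero] at h2
    norm_num at h2
  set p : ℝ := α + d with hp
  have hp0 : (0:ℝ) < p := by positivity
  have hdp : (d : ℝ) < p := by rw [hp]; linarith
  have hA := aux_intOn d p hdp
  set κ := ∫ w in {w : EuclideanSpace ℝ (Fin d) | 1 ≤ ‖w‖}, ‖w‖ ^ (-p) with hκ
  have hκ0 : 0 ≤ κ := setIntegral_nonneg
    (isClosed_le continuous_const continuous_norm).measurableSet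
    fun w _ => Real.rpow_nonneg (norm_nonneg w) _
  -- measurable antitone extension of φ
  set ψ : ℝ → ℝ := fun s => φ (max s 1) with hψ
  have hψanti : Antitone ψ := fun s s' h =>
    hφmono (Set.mem_Ioi.2 (lt_of_lt_of_le one_pos (le_max_right s 1)))
      (Set.mem_Ioi.2 (lt_of_lt_of_le one_pos (le_max_right s' 1)))
      (max_le_max h le_rfl)
  have hψmeas : Measurable ψ := hψanti.measurable
  have hψeq : ∀ s : ℝ, 1 ≤ s → ψ s = φ s := fun s hs => by
    simp only [hψ, max_eq_left hs]
  have hψnn : ∀ s : ℝ, 0 ≤ ψ s := fun s =>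
    (hφpos _ (lt_of_lt_of_le one_pos (le_max_right s 1))).le
  refine ⟨c * 2 ^ (p + 1) * (κ + 1), by positivity, fun x y hxy => ?_⟩
  set t := dist x y with ht
  have ht0 : (0:ℝ) < t := by linarith
  rw [dist_comm y x, ← ht]
  set S : Set (EuclideanSpace ℝ (Fin d)) :=
    {z : EuclideanSpace ℝ (Fin d) | 1 ≤ dist x z ∧ 1 ≤ dist y z} with hS
  have hSm : MeasurableSet S := by
    rw [hS, Set.setOf_and]
    exact (aux_setm x).inter (aux_setm y)
  have hSsubx : S ⊆ {z : EuclideanSpace ℝ (Fin d) | 1 ≤ dist x z} := fun z hz => hz.1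
  have hSsuby : S ⊆ {z : EuclideanSpace ℝ (Fin d) | 1 ≤ dist y z} := fun z hz => hz.2
  set F' : EuclideanSpace ℝ (Fin d) → ℝ :=
    fun z => ψ (dist y z) * dist y z ^ (-p) * (ψ (dist x z) * dist x z ^ (-p)) with hF'
  have hstep1 : ∫ z in S,
      φ (dist y z) * dist y z ^ (-(α + d)) * (φ (dist z x) * dist z x ^ (-(α + d)))
      = ∫ z in S, F' z := by
    refine setIntegral_congr_fun hSm fun z hz => ?_
    rw [hF']
    simp only [dist_comm z x]
    rw [hψeq _ hz.2, hψeq _ hz.1, ← hp]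
  rw [hstep1]
  -- dominating function
  set D : ℝ := c * φ t * (t / 2) ^ (-p) with hD
  have hφt : 0 < φ t := hφpos t ht0
  have hD0 : 0 ≤ D := by positivity
  set G : EuclideanSpace ℝ (Fin d) → ℝ :=
    fun z => D * (dist y z ^ (-p) + dist x z ^ (-p)) with hG
  -- null set
  have hnull : volume ({z : EuclideanSpace ℝ (Fin d) | dist y z = 1}
      ∪ {z : EuclideanSpace ℝ (Fin d) | dist x z = 1}) = 0 := by
    apply measure_union_null
    · have : {z : EuclideanSpace ℝ (Fin d) | dist y z = 1} = Metric.sphere y 1 := by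
        ext z; simp [Metric.sphere, dist_comm]
      rw [this]; exact Measure.addHaar_sphere volume y 1
    · have : {z : EuclideanSpace ℝ (Fin d) | dist x z = 1} = Metric.sphere x 1 := by
        ext z; simp [Metric.sphere, dist_comm]
      rw [this]; exact Measure.addHaar_sphere volume x 1
  have haeS : ∀ᵐ z ∂(volume.restrict S), F' z ≤ G z := by
    filter_upwards [ae_restrict_mem hSm,
      ae_restrict_of_ae (measure_eq_zero_iff_ae_notMem.1 hnull)] with z hzS hzN
    simp only [Set.mem_union, Set.mem_setOf_eq, not_or] at hzN
    have ha1 : 1 < dist y z := lt_of_le_of_ne hzS.2 (Ne.symm hzN.1)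
    have hb1 : 1 < dist x z := lt_of_le_of_ne hzS.1 (Ne.symm hzN.2)
    have ha0 : (0:ℝ) < dist y z := by linarith
    have hb0 : (0:ℝ) < dist x z := by linarith
    have htri : t ≤ dist y z + dist x z := by
      calc t = dist x y := ht
        _ ≤ dist x z + dist z y := dist_triangle x z y
        _ = dist y z + dist x z := by rw [dist_comm z y]; ring
    have hmul1 : φ (dist y z) * φ (dist x z) ≤ c * φ t := by
      calc φ (dist y z) * φ (dist x z) ≤ c * φ (dist y z + dist x z) :=
            hφmul _ _ ha1 hb1
        _ ≤ c * φ t := by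
            apply mul_le_mul_of_nonneg_left _ hc.le
            exact hφmono (Set.mem_Ioi.2 ht0) (Set.mem_Ioi.2 (by linarith)) htri
    have hna : 0 ≤ dist y z ^ (-p) := Real.rpow_nonneg ha0.le _
    have hnb : 0 ≤ dist x z ^ (-p) := Real.rpow_nonneg hb0.le _
    have hnt : 0 ≤ (t/2 : ℝ) ^ (-p) := Real.rpow_nonneg (by linarith) _
    have hmul2 : dist y z ^ (-p) * dist x z ^ (-p)
        ≤ (t/2) ^ (-p) * (dist y z ^ (-p) + dist x z ^ (-p)) := by
      by_cases hcase : t/2 ≤ dist y z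
      · have h1 : dist y z ^ (-p) ≤ (t/2) ^ (-p) :=
          Real.rpow_le_rpow_of_nonpos (by linarith) hcase (neg_nonpos.mpr hp0.le)
        nlinarith
      · have hcase' : t/2 ≤ dist x z := by linarith
        have h1 : dist x z ^ (-p) ≤ (t/2) ^ (-p) :=
          Real.rpow_le_rpow_of_nonpos (by linarith) hcase' (neg_nonpos.mpr hp0.le)
        nlinarith
    have hFz : F' z = (φ (dist y z) * φ (dist x z)) *
        (dist y z ^ (-p) * dist x z ^ (-p)) := by
      simp only [hF', hψeq _ hzS.2, hψeq _ hzS.1]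
      ring
    rw [hFz, hG, hD]
    have h0 : 0 ≤ φ (dist y z) * φ (dist x z) :=
      mul_nonneg (hφpos _ ha0).le (hφpos _ hb0).le
    calc (φ (dist y z) * φ (dist x z)) * (dist y z ^ (-p) * dist x z ^ (-p))
        ≤ (c * φ t) * ((t/2) ^ (-p) * (dist y z ^ (-p) + dist x z ^ (-p))) :=
          mul_le_mul hmul1 hmul2 (by positivity) (by positivity)
      _ = c * φ t * (t / 2) ^ (-p) * (dist y z ^ (-p) + dist x z ^ (-p)) := by ring
  -- integrability
  have hIa : IntegrableOn (fun z : EuclideanSpace ℝ (Fin d) => dist y z ^ (-p)) S volume :=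
    ((aux_transl d p hA y).1).mono_set hSsuby
  have hIb : IntegrableOn (fun z : EuclideanSpace ℝ (Fin d) => dist x z ^ (-p)) S volume :=
    ((aux_transl d p hA x).1).mono_set hSsubx
  have hIG : IntegrableOn G S volume := by
    rw [hG]
    exact (hIa.add hIb).const_mul D
  have hF'meas : Measurable F' := by
    rw [hF']
    exact ((hψmeas.comp (continuous_const.dist continuous_id).measurable).mul
      (((continuous_const.dist continuous_id).measurable).pow measurable_const)).mul
      ((hψmeas.comp (continuous_const.dist continuous_id).measurable).mul
      (((continuous_const.dist continuous_id).measurable).pow measurable_const))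
  have hF'nn : ∀ z, 0 ≤ F' z := fun z => by
    rw [hF']
    have := hψnn (dist y z); have := hψnn (dist x z)
    have : (0:ℝ) ≤ dist y z ^ (-p) := Real.rpow_nonneg dist_nonneg _
    positivity
  have hIF' : IntegrableOn F' S volume := by
    refine Integrable.mono' hIG hF'meas.aestronglyMeasurable ?_
    filter_upwards [haeS] with z hz
    rwa [Real.norm_eq_abs, abs_of_nonneg (hF'nn z)]
  -- chain of inequalities
  have hstep2 : ∫ z in S, F' z ≤ ∫ z in S, G z := integral_mono_ae hIF' hIG haeS
  have hstep3 : ∫ z in S, G z ≤ D * (κ + κ) := by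
    rw [hG]
    rw [integral_const_mul]
    apply mul_le_mul_of_nonneg_left _ hD0
    rw [integral_add hIa hIb]
    have h1 : ∫ z in S, dist y z ^ (-p) ≤ κ := by
      rw [hκ, ← (aux_transl d p hA y).2]
      exact setIntegral_mono_set (aux_transl d p hA y).1
        (Filter.Eventually.of_forall fun z => Real.rpow_nonneg dist_nonneg _)
        (HasSubset.Subset.eventuallyLE hSsuby)
    have h2 : ∫ z in S, dist x z ^ (-p) ≤ κ := by
      rw [hκ, ← (aux_transl d p hA x).2]
      exact setIntegral_mono_set (aux_transl d p hA x).1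
        (Filter.Eventually.of_forall fun z => Real.rpow_nonneg dist_nonneg _)
        (HasSubset.Subset.eventuallyLE hSsubx)
    linarith
  have hfinal : D * (κ + κ) ≤ c * 2 ^ (p + 1) * (κ + 1) * (φ t * t ^ (-(α + d))) := by
    have hhalf : ((t:ℝ)/2) ^ (-p) = t ^ (-p) * 2 ^ p := by
      rw [Real.div_rpow (by linarith) (by norm_num), Real.rpow_neg (by norm_num : (0:ℝ) ≤ 2)]
      field_simp
    have h2p : (2:ℝ) ^ (p + 1) = 2 ^ p * 2 := by
      rw [Real.rpow_add (by norm_num) p 1, Real.rpow_one]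
    rw [hD, hhalf, h2p, ← hp]
    have htp : 0 ≤ (t:ℝ) ^ (-p) := Real.rpow_nonneg ht0.le _
    have h2pn : (0:ℝ) < 2 ^ p := Real.rpow_pos_of_pos (by norm_num) p
    nlinarith [mul_nonneg (mul_nonneg hc.le hφt.le) (mul_nonneg htp h2pn.le)]
  calc ∫ z in S, F' z ≤ ∫ z in S, G z := hstep2
    _ ≤ D * (κ + κ) := hstep3
    _ ≤ c * 2 ^ (p + 1) * (κ + 1) * (φ t * t ^ (-(α + d))) := hfinal
end

section
/- Let B(x, p+k) and B(y, n-p) be Euclidean balls in ℝ^d with |y - x| = n ∈ ℕ, 1 ≤ p ≤ n-1, and 0 < k ≤ n - p. Then the Lebesgue measure of B(x, p+k) ∩ B(y, n-p) is at most c k^{(d+1)/2} (min(p+k, n-p))^{(d-1)/2} for a constant c depending only on d. -/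
open MeasureTheory Metric Set
open scoped RealInnerProductSpace

/-!
Put `u = (y - x) / n` and, for `z` in the lens, `t = ⟪u, z - x⟫`. The two balls force
`p < t < p + k`, and the squared distance from `z` to the line `x + ℝ u` equals both
`‖z - x‖² - t²` and `‖z - y‖² - (n - t)²`. Each of these has the form `A² - s²` with
`A` below the radius `r` of the corresponding ball and `A - s ≤ k`, so it is at most `2 k r`.
Hence the lens lies in a cylinder of height `k` and radius `√(2 k m)`,
`m = min (p + k) (n - p)`, and so in a box of volume `k (2 √(2 k m)) ^ (d - 1)`.
-/

lemma sq_sub_sq_le_two_mul_mul {A s r c : ℝ} (hs : |s| ≤ A) (hA : A < r) (hc : A - s ≤ c) :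
    A ^ 2 - s ^ 2 ≤ 2 * c * r := by
  have := abs_le.mp hs
  nlinarith

lemma mul_two_mul_sqrt_pow_eq {k m : ℝ} (hk : 0 ≤ k) (hm : 0 ≤ m) {d : ℕ} (hd : 1 ≤ d) :
    k * (2 * √(2 * k * m)) ^ (d - 1)
      = 8 ^ (((d : ℝ) - 1) / 2) * k ^ (((d : ℝ) + 1) / 2) * m ^ (((d : ℝ) - 1) / 2) := by
  have hsqrt : 2 * √(2 * k * m) = (8 * k * m) ^ (1 / 2 : ℝ) := by
    rw [← Real.sqrt_eq_rpow, show 8 * k * m = 2 ^ 2 * (2 * k * m) by ring,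
      Real.sqrt_mul (by norm_num) (2 * k * m), Real.sqrt_sq zero_le_two]
  have hk' : k * k ^ (((d : ℝ) - 1) / 2) = k ^ (((d : ℝ) + 1) / 2) := by
    have : (1 : ℝ) ≤ d := by exact_mod_cast hd
    rw [← Real.rpow_one_add' hk (by linarith)]
    ring_nf
  rw [hsqrt, ← Real.rpow_natCast, ← Real.rpow_mul (by positivity), Nat.cast_sub hd,
    Real.mul_rpow (by positivity) hm, Real.mul_rpow (by norm_num) hk, ← hk']
  ring_nf

lemma EuclideanSpace.volume_preimage_pi_update {ι : Type*} [Fintype ι] [DecidableEq ι] (i₀ : ι)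
    (s t : Set ℝ) :
    volume ((MeasurableEquiv.toLp 2 (ι → ℝ)).symm ⁻¹' univ.pi (Function.update (fun _ => t) i₀ s))
      = volume s * volume t ^ (Fintype.card ι - 1) := by
  rw [(EuclideanSpace.volume_preserving_symm_measurableEquiv_toLp ι).measure_preimage_equiv,
    volume_pi_pi]
  simp only [Function.apply_update (fun _ => (volume : Measure ℝ))]
  rw [Finset.prod_update_of_mem (Finset.mem_univ i₀), Finset.prod_const,
    Finset.card_sdiff_of_subset (by simp), Finset.card_singleton, Finset.card_univ]

lemma EuclideanSpace.sq_add_sq_le_norm_sq {ι : Type*} [Fintype ι] {i j : ι} (hij : i ≠ j)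
    (v : EuclideanSpace ℝ ι) : v i ^ 2 + v j ^ 2 ≤ ‖v‖ ^ 2 := by
  classical
  rw [EuclideanSpace.norm_sq_eq, ← Finset.sum_pair (f := fun k => v k ^ 2) hij]
  simp only [Real.norm_eq_abs, sq_abs]
  exact Finset.sum_le_sum_of_subset_of_nonneg (Finset.subset_univ _) fun k _ _ => sq_nonneg _

section InnerProductSpace

variable {F : Type*} [NormedAddCommGroup F] [InnerProductSpace ℝ F]

-- For a unit vector `u`, the second condition says that `z` is within `R` of the line `x + ℝ u`.
def axialCylinder (x u : F) (a b R : ℝ) : Set F :=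
  {z | ⟪u, z - x⟫ ∈ Icc a b ∧ ‖z - x‖ ^ 2 - ⟪u, z - x⟫ ^ 2 ≤ R ^ 2}

lemma ball_inter_ball_subset_axialCylinder {x u : F} (hu : ‖u‖ = 1) {a k r₁ r₂ : ℝ}
    (hr : r₁ + r₂ ≤ a + k) :
    ball x r₁ ∩ ball (x + a • u) r₂ ⊆ axialCylinder x u (r₁ - k) r₁ √(2 * k * min r₁ r₂) := by
  rintro z ⟨hz₁, hz₂⟩
  rw [mem_ball, dist_eq_norm] at hz₁ hz₂
  set t := ⟪u, z - x⟫
  have ht : |t| ≤ ‖z - x‖ := by simpa [hu] using abs_real_inner_le_norm u (z - x)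
  have hzy : z - (x + a • u) = (z - x) - a • u := by abel
  have hat : |a - t| ≤ ‖z - (x + a • u)‖ := by
    have : ⟪u, z - (x + a • u)⟫ = t - a := by
      rw [hzy, inner_sub_right, real_inner_smul_right, real_inner_self_eq_norm_sq, hu]; ring
    simpa [hu, this, abs_sub_comm] using abs_real_inner_le_norm u (z - (x + a • u))
  have htrans : ‖z - (x + a • u)‖ ^ 2 - (a - t) ^ 2 = ‖z - x‖ ^ 2 - t ^ 2 := by
    rw [hzy, norm_sub_sq_real, real_inner_smul_right, norm_smul, hu, real_inner_comm]
    simp only [Real.norm_eq_abs, sq_abs, mul_one]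
    ring
  have ht_lt : t < r₁ := (le_abs_self t).trans_lt (ht.trans_lt hz₁)
  have hat_lt : a - t < r₂ := (le_abs_self (a - t)).trans_lt (hat.trans_lt hz₂)
  have h₁ : ‖z - x‖ ^ 2 - t ^ 2 ≤ 2 * k * r₁ :=
    sq_sub_sq_le_two_mul_mul ht hz₁ (by linarith)
  have h₂ : ‖z - x‖ ^ 2 - t ^ 2 ≤ 2 * k * r₂ :=
    htrans ▸ sq_sub_sq_le_two_mul_mul hat hz₂ (by linarith)
  have hmin : ‖z - x‖ ^ 2 - t ^ 2 ≤ 2 * k * min r₁ r₂ := by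
    rcases min_choice r₁ r₂ with h | h <;> rw [h] <;> assumption
  have hnonneg : 0 ≤ ‖z - x‖ ^ 2 - t ^ 2 := by nlinarith [abs_le.mp ht, norm_nonneg (z - x)]
  refine ⟨⟨by linarith, ht_lt.le⟩, ?_⟩
  rwa [Real.sq_sqrt (hnonneg.trans hmin)]

lemma volume_axialCylinder_le [FiniteDimensional ℝ F] [MeasurableSpace F] [BorelSpace F] {x u : F}
    (hu : ‖u‖ = 1) (a b : ℝ) {R : ℝ} (hR : 0 ≤ R) :
    volume (axialCylinder x u a b R)
      ≤ ENNReal.ofReal (b - a) * ENNReal.ofReal (2 * R) ^ (Module.finrank ℝ F - 1) := by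
  classical
  set N := Module.finrank ℝ F
  have hN : 0 < N :=
    Module.finrank_pos_iff_exists_ne_zero.mpr ⟨u, norm_ne_zero_iff.mp (by simp [hu])⟩
  let i₀ : Fin N := ⟨0, hN⟩
  have hu' : Orthonormal ℝ (({i₀} : Set (Fin N)).domRestrict fun _ => u) :=
    ⟨fun _ => hu, fun i j hij => absurd (Subsingleton.elim i j) hij⟩
  obtain ⟨e, he⟩ := hu'.exists_orthonormalBasis_extension_of_card_eq (by simp [N])
  let box : Set (EuclideanSpace ℝ (Fin N)) := (MeasurableEquiv.toLp 2 (Fin N → ℝ)).symm ⁻¹'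
    univ.pi (Function.update (fun _ => Icc (-R) R) i₀ (Icc a b))
  have hsub : axialCylinder x u a b R ⊆ (fun z => e.repr (z - x)) ⁻¹' box := by
    rintro z ⟨hslab, htrans⟩
    have hcoord : e.repr (z - x) i₀ = ⟪u, z - x⟫ := by rw [e.repr_apply_apply, he i₀ rfl]
    refine mem_univ_pi.mpr fun i => ?_
    change e.repr (z - x) i ∈ _
    rcases eq_or_ne i i₀ with rfl | hi
    · rwa [Function.update_self, hcoord]
    · have := EuclideanSpace.sq_add_sq_le_norm_sq hi (e.repr (z - x))
      rw [LinearIsometryEquiv.norm_map, hcoord] at this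
      rw [Function.update_of_ne hi]
      exact abs_le_of_sq_le_sq' (by linarith) hR
  calc volume (axialCylinder x u a b R)
      ≤ volume ((fun z => e.repr (z - x)) ⁻¹' box) := measure_mono hsub
    _ ≤ volume box :=
      (e.measurePreserving_repr.comp (measurePreserving_sub_right volume x)).measure_preimage_le _
    _ = _ := by
      rw [EuclideanSpace.volume_preimage_pi_update, Real.volume_Icc, Real.volume_Icc,
        Fintype.card_fin, sub_neg_eq_add, two_mul]

end InnerProductSpace

theorem stmt_5 (d : ℕ) (hd : 1 ≤ d) :
    ∃ c : ℝ, 0 < c ∧ ∀ (x y : EuclideanSpace ℝ (Fin d)) (n p : ℕ) (k : ℝ),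
      dist y x = n → 1 ≤ p → p ≤ n - 1 → 0 < k → k ≤ (n : ℝ) - p →
      (volume (ball x ((p : ℝ) + k) ∩ ball y ((n : ℝ) - p))).toReal
        ≤ c * k ^ (((d : ℝ) + 1) / 2) * (min ((p : ℝ) + k) ((n : ℝ) - p)) ^ (((d : ℝ) - 1) / 2) := by
  refine ⟨8 ^ (((d : ℝ) - 1) / 2), by positivity, ?_⟩
  intro x y n p k hxy hp hpn hk hkn
  have hpn' : (p : ℝ) + 1 ≤ n := by exact_mod_cast (by omega : p + 1 ≤ n)
  have hn : (0 : ℝ) < n := by linarith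
  set u := (n : ℝ)⁻¹ • (y - x)
  have hu : ‖u‖ = 1 := by
    rw [norm_smul, ← dist_eq_norm, hxy, norm_inv, Real.norm_natCast, inv_mul_cancel₀ hn.ne']
  have hy : x + (n : ℝ) • u = y := by simp [u, smul_smul, mul_inv_cancel₀ hn.ne']
  have hlens := ball_inter_ball_subset_axialCylinder (x := x) hu (a := n) (k := k)
    (r₁ := p + k) (r₂ := n - p) (by linarith)
  have hvol := (measure_mono hlens).trans (volume_axialCylinder_le hu _ _ (Real.sqrt_nonneg _))
  rw [hy, sub_sub_cancel, finrank_euclideanSpace_fin, ← ENNReal.ofReal_pow (by positivity),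
    ← ENNReal.ofReal_mul hk.le] at hvol
  rw [← mul_two_mul_sqrt_pow_eq hk.le (le_min (by linarith) (by linarith)) hd]
  exact ENNReal.toReal_le_of_le_ofReal (by positivity) hvol
end

section
/- Suppose f : ℝ^d × ℝ^d → [0,∞) is Borel, φ : [0,∞) → (0,1] with φ = 1 on [0,1], and infₓ ∫_{|y-x|>ε} f(x,y)/φ(|y-x|) dy ≥ c₄ ε^{-α} for all ε > 0, while f(x,y) ≤ M φ(|y-x|) |y-x|^{-(α+d)}. Then there exist ε₀ > 0 and c₆ > 0 (depending only on φ, M, α, d) such that infₓ ∫_{|y-x|>ε} f(x,y) dy ≥ c₆ ε^{-α} for all 0 < ε ≤ ε₀. -/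
open MeasureTheory

theorem stmt_7 (d : ℕ) (hd : 1 ≤ d) (α M c₄ : ℝ) (hα : 0 < α) (hα2 : α < 2)
    (hM : 0 < M) (hc₄ : 0 < c₄)
    (f : EuclideanSpace ℝ (Fin d) → EuclideanSpace ℝ (Fin d) → ℝ)
    (hf0 : ∀ x y, 0 ≤ f x y)
    (hfmeas : Measurable (Function.uncurry f))
    (φ : ℝ → ℝ) (hφpos : ∀ s, 0 ≤ s → 0 < φ s) (hφle : ∀ s, 0 ≤ s → φ s ≤ 1)
    (hφ1 : ∀ s, 0 ≤ s → s ≤ 1 → φ s = 1)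
    (hlow : ∀ ε : ℝ, 0 < ε → ∀ x,
      c₄ * ε ^ (-α) ≤ ∫ y in {y : EuclideanSpace ℝ (Fin d) | dist y x > ε}, f x y / φ (dist y x))
    (hup : ∀ x y, f x y ≤ M * φ (dist y x) * dist y x ^ (-(α + d))) :
    ∃ ε₀ : ℝ, 0 < ε₀ ∧ ∃ c₆ : ℝ, 0 < c₆ ∧ ∀ ε : ℝ, 0 < ε → ε ≤ ε₀ → ∀ x,
      c₆ * ε ^ (-α) ≤ ∫ y in {y : EuclideanSpace ℝ (Fin d) | dist y x > ε}, f x y := by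
  have hαd : (0:ℝ) < α + d := by positivity
  set p : ℝ := -(α + d) with hp
  have hS0 : MeasurableSet {z : EuclideanSpace ℝ (Fin d) | 1 < ‖z‖} :=
    (isOpen_lt continuous_const continuous_norm).measurableSet
  have hIntBig : IntegrableOn (fun z : EuclideanSpace ℝ (Fin d) => ‖z‖ ^ p)
      {z : EuclideanSpace ℝ (Fin d) | 1 < ‖z‖} volume := by
    have hfin : ((Module.finrank ℝ (EuclideanSpace ℝ (Fin d)) : ℝ)) < α + d := by
      simp only [finrank_euclideanSpace_fin]; linarith
    refine Integrable.mono'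
      (((integrable_one_add_norm hfin).const_mul ((2:ℝ) ^ (α + d))).integrableOn)
      ((measurable_norm.pow_const p).aestronglyMeasurable) ?_
    filter_upwards [ae_restrict_mem hS0] with z hz
    have h1 : (0:ℝ) < ‖z‖ := lt_trans one_pos hz
    rw [Real.norm_of_nonneg (Real.rpow_nonneg (norm_nonneg z) p)]
    have h2 : (1 + ‖z‖) ≤ 2 * ‖z‖ := by linarith [hz.le]
    have h3 : (2 * ‖z‖) ^ p ≤ (1 + ‖z‖) ^ p :=
      Real.rpow_le_rpow_of_nonpos (by positivity) h2 (by simp [hp]; linarith)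
    have h4 : (2 * ‖z‖) ^ p = 2 ^ p * ‖z‖ ^ p := Real.mul_rpow (by norm_num) (norm_nonneg z)
    have e : (2:ℝ) ^ (α+d) * 2 ^ p = 1 := by
      rw [hp, ← Real.rpow_add two_pos, add_neg_cancel, Real.rpow_zero]
    have h5 : ‖z‖ ^ p = 2 ^ (α+d) * (2 ^ p * ‖z‖ ^ p) := by
      rw [← mul_assoc, e, one_mul]
    have h6 : (0:ℝ) < 2 ^ (α+d) := Real.rpow_pos_of_pos two_pos _
    calc ‖z‖ ^ p = 2 ^ (α+d) * ((2*‖z‖) ^ p) := by rw [h4]; exact h5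
      _ ≤ 2 ^ (α+d) * (1 + ‖z‖) ^ p := by nlinarith
      _ = 2 ^ (α+d) * (1 + ‖z‖) ^ (-(α+d)) := by rw [hp]
  set C0 : ℝ := ∫ z in {z : EuclideanSpace ℝ (Fin d) | 1 < ‖z‖}, ‖z‖ ^ p with hC0def
  have htrans : ∀ x : EuclideanSpace ℝ (Fin d),
      IntegrableOn (fun y => dist y x ^ p) {y | 1 < dist y x} volume ∧
      (∫ y in {y : EuclideanSpace ℝ (Fin d) | 1 < dist y x}, dist y x ^ p) = C0 := by
    intro x
    have hT : MeasurableSet {y : EuclideanSpace ℝ (Fin d) | 1 < dist y x} :=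
      (isOpen_lt continuous_const (continuous_id.dist continuous_const)).measurableSet
    have hind : (fun y : EuclideanSpace ℝ (Fin d) =>
        ({z : EuclideanSpace ℝ (Fin d) | 1 < ‖z‖}.indicator (fun z => ‖z‖ ^ p)) (y - x))
        = {y : EuclideanSpace ℝ (Fin d) | 1 < dist y x}.indicator (fun y => dist y x ^ p) := by
      funext y
      simp only [Set.indicator, Set.mem_setOf_eq, dist_eq_norm]
    constructor
    · rw [← integrable_indicator_iff hT, ← hind]
      exact ((integrable_indicator_iff hS0).2 hIntBig).comp_sub_right x
    · rw [← integral_indicator hT, ← hind, integral_sub_right_eq_self, integral_indicator hS0]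
  have hC0nn : 0 ≤ C0 :=
    setIntegral_nonneg hS0 fun z _ => Real.rpow_nonneg (norm_nonneg z) p
  set C : ℝ := M * C0 with hCdef
  have hCnn : 0 ≤ C := mul_nonneg hM.le hC0nn
  refine ⟨min 1 ((c₄ / (2 * (C + 1))) ^ (α⁻¹)),
    lt_min one_pos (Real.rpow_pos_of_pos (by positivity) _), c₄ / 2, by positivity, ?_⟩
  intro ε hε hεle x
  have hε1 : ε ≤ 1 := hεle.trans (min_le_left _ _)
  set S : Set (EuclideanSpace ℝ (Fin d)) := {y | dist y x > ε} with hSdef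
  set T : Set (EuclideanSpace ℝ (Fin d)) := {y | 1 < dist y x} with hTdef
  set A : Set (EuclideanSpace ℝ (Fin d)) := {y | ε < dist y x ∧ dist y x ≤ 1} with hAdef
  have hSmeas : MeasurableSet S :=
    (isOpen_lt continuous_const (continuous_id.dist continuous_const)).measurableSet
  have hTmeas : MeasurableSet T :=
    (isOpen_lt continuous_const (continuous_id.dist continuous_const)).measurableSet
  have hAmeas : MeasurableSet A := by
    have : A = S ∩ {y | dist y x ≤ 1} := by
      ext y; simp [hAdef, hSdef, Set.mem_setOf_eq]
    rw [this]
    exact hSmeas.inter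
      ((isClosed_le (continuous_id.dist continuous_const) continuous_const).measurableSet)
  have hSAT : S = A ∪ T := by
    ext y
    simp only [hSdef, hAdef, hTdef, Set.mem_setOf_eq, Set.mem_union, gt_iff_lt]
    constructor
    · intro h
      by_cases h1 : dist y x ≤ 1
      · exact Or.inl ⟨h, h1⟩
      · exact Or.inr (lt_of_not_ge h1)
    · rintro (⟨h, _⟩ | h)
      · exact h
      · linarith
  have hdisj : Disjoint A T := by
    rw [Set.disjoint_left]
    rintro y ⟨_, h2⟩ h3
    exact absurd h3 (not_lt.2 h2)
  have hb : ∀ y, f x y ≤ M * dist y x ^ p ∧ f x y / φ (dist y x) ≤ M * dist y x ^ p := by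
    intro y
    have hd0 : (0:ℝ) ≤ dist y x := dist_nonneg
    have hφp := hφpos _ hd0
    have h1 := hup x y
    have hdp : 0 ≤ dist y x ^ p := Real.rpow_nonneg hd0 p
    have hφl := hφle _ hd0
    constructor
    · calc f x y ≤ M * φ (dist y x) * dist y x ^ p := h1
        _ ≤ M * 1 * dist y x ^ p :=
            mul_le_mul_of_nonneg_right (mul_le_mul_of_nonneg_left hφl hM.le) hdp
        _ = M * dist y x ^ p := by ring
    · rw [div_le_iff₀ hφp]
      calc f x y ≤ M * φ (dist y x) * dist y x ^ p := h1
        _ = M * dist y x ^ p * φ (dist y x) := by ring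
  have hIntT : IntegrableOn (fun y => dist y x ^ p) T volume := (htrans x).1
  have hIntA : IntegrableOn (fun y => dist y x ^ p) A volume := by
    have hmA : volume A ≠ ⊤ := by
      refine ne_of_lt (lt_of_le_of_lt (measure_mono (fun y hy => ?_))
        (measure_closedBall_lt_top (x := x) (r := 1)))
      exact Metric.mem_closedBall.2 hy.2
    refine Measure.integrableOn_of_bounded (M := ε ^ p) hmA
      (((measurable_id.dist measurable_const).pow_const p).aestronglyMeasurable) ?_
    filter_upwards [ae_restrict_mem hAmeas] with y hy
    rw [Real.norm_of_nonneg (Real.rpow_nonneg dist_nonneg p)]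
    exact Real.rpow_le_rpow_of_nonpos hε hy.1.le (by simp [hp]; linarith)
  have hIntS : IntegrableOn (fun y => dist y x ^ p) S volume := by
    rw [hSAT]; exact hIntA.union hIntT
  have hfxmeas : Measurable (f x) := hfmeas.of_uncurry_left
  have hfIntS : IntegrableOn (f x) S volume := by
    refine Integrable.mono' (hIntS.const_mul M) hfxmeas.aestronglyMeasurable ?_
    filter_upwards with y
    rw [Real.norm_of_nonneg (hf0 x y)]
    exact (hb y).1
  have hlow' := hlow ε hε x
  have hgIntS : IntegrableOn (fun y => f x y / φ (dist y x)) S volume := by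
    by_contra h
    rw [integral_undef h] at hlow'
    have hpos : (0:ℝ) < c₄ * ε ^ (-α) := by positivity
    linarith
  have hAsub : A ⊆ S := fun y hy => hy.1
  have hTsub : T ⊆ S := fun y hy => lt_of_le_of_lt hε1 hy
  have hgA : IntegrableOn (fun y => f x y / φ (dist y x)) A volume := hgIntS.mono_set hAsub
  have hgT : IntegrableOn (fun y => f x y / φ (dist y x)) T volume := hgIntS.mono_set hTsub
  have hsplit : ∫ y in S, f x y / φ (dist y x)
      = (∫ y in A, f x y / φ (dist y x)) + ∫ y in T, f x y / φ (dist y x) := by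
    rw [hSAT]; exact setIntegral_union hdisj hTmeas hgA hgT
  have hTle : ∫ y in T, f x y / φ (dist y x) ≤ C := by
    calc ∫ y in T, f x y / φ (dist y x) ≤ ∫ y in T, M * dist y x ^ p :=
          setIntegral_mono_on hgT (hIntT.const_mul M) hTmeas (fun y _ => (hb y).2)
      _ = M * ∫ y in T, dist y x ^ p := integral_const_mul M _
      _ = C := by rw [(htrans x).2]
  have hAeq : ∫ y in A, f x y / φ (dist y x) = ∫ y in A, f x y := by
    refine setIntegral_congr_fun hAmeas fun y hy => ?_
    rw [hφ1 _ dist_nonneg hy.2, div_one]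
  have hAle : ∫ y in A, f x y ≤ ∫ y in S, f x y :=
    setIntegral_mono_set hfIntS (ae_of_all _ fun y => hf0 x y) (HasSubset.Subset.eventuallyLE hAsub)
  have h1 : c₄ * ε ^ (-α) - C ≤ ∫ y in S, f x y := by linarith
  have hεα : ε ^ α ≤ c₄ / (2 * (C + 1)) := by
    have h2 : ε ≤ (c₄ / (2 * (C + 1))) ^ (α⁻¹) := hεle.trans (min_le_right _ _)
    calc ε ^ α ≤ ((c₄ / (2 * (C + 1))) ^ (α⁻¹)) ^ α := Real.rpow_le_rpow hε.le h2 hα.le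
      _ = c₄ / (2 * (C + 1)) := Real.rpow_inv_rpow (by positivity) hα.ne'
  have hεαpos : 0 < ε ^ α := Real.rpow_pos_of_pos hε α
  have hrw : ε ^ (-α) = (ε ^ α)⁻¹ := Real.rpow_neg hε.le α
  have h3 : ε ^ α * (2 * (C + 1)) ≤ c₄ := (le_div_iff₀ (by positivity)).1 hεα
  have h5 : C ≤ (c₄ / 2) / (ε ^ α) := (le_div_iff₀ hεαpos).2 (by nlinarith)
  rw [div_eq_mul_inv] at h5
  rw [hrw] at h1 ⊢
  linarith
end

section
/- With f_{n,ε} defined recursively by f_{1,ε} = f_ε and f_{n+1,ε}(x,y) = ∫ f_{n,ε}(x,z) f_ε(z,y) dz + (b̄ - b_ε(y)) f_{n,ε}(x,y) + (b̄ - b_ε(x))^n f_ε(x,y), where b_ε(x) = ∫ f_ε(x,y) dy and b̄ = sup_x b_ε(x) < ∞, one has for every x and n ≥ 1: ∫ f_{n,ε}(x,y) dy = b̄^n - (b̄ - b_ε(x))^n. -/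
/-!
Write `b x = ∫ f_ε(x,y) dy`. Integrating the recursion in `y` and swapping the order of
integration in the first term (Fubini, justified by `f_{n,ε} ≥ 0` and `b ≤ b̄`) turns it into
`∫ b(z) f_{n,ε}(x,z) dz`, which cancels against the `-b(y)` part of the second term. Hence
`∫ f_{n+1,ε}(x,·) = b̄ ∫ f_{n,ε}(x,·) + (b̄ - b(x))^n b(x)`, and the closed form follows by
induction.
-/

open MeasureTheory Function

structure IsNonnegIntegrableKernel {α : Type*} [MeasurableSpace α] (μ : Measure α)
    (k : α → α → ℝ) : Prop where
  measurable : Measurable (uncurry k)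
  nonneg : ∀ x y, 0 ≤ k x y
  integrable : ∀ x, Integrable (k x) μ

namespace IsNonnegIntegrableKernel

variable {α : Type*} [MeasurableSpace α] {μ : Measure α}
  {F k G : α → α → ℝ} {b c : α → ℝ} {B : ℝ}

theorem measurable_of_eq_integral [SFinite μ] (hk : IsNonnegIntegrableKernel μ k)
    (hb : ∀ x, b x = ∫ y, k x y ∂μ) : Measurable b := by
  rw [funext hb]
  exact hk.measurable.stronglyMeasurable.integral_prod_right'.measurable

theorem nonneg_of_eq_integral (hk : IsNonnegIntegrableKernel μ k)
    (hb : ∀ x, b x = ∫ y, k x y ∂μ) (x : α) : 0 ≤ b x :=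
  hb x ▸ integral_nonneg (hk.nonneg x)

theorem integrable_mul_left [SFinite μ] (hF : IsNonnegIntegrableKernel μ F)
    (hk : IsNonnegIntegrableKernel μ k) (hb : ∀ z, b z = ∫ y, k z y ∂μ) (hbB : ∀ z, b z ≤ B)
    (x : α) : Integrable (fun z => b z * F x z) μ :=
  (hF.integrable x).bdd_mul (c := B) (hk.measurable_of_eq_integral hb).aestronglyMeasurable
    (.of_forall fun z => by rw [Real.norm_of_nonneg (hk.nonneg_of_eq_integral hb z)]; exact hbB z)

theorem integrable_sub_mul [SFinite μ] (hF : IsNonnegIntegrableKernel μ F)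
    (hk : IsNonnegIntegrableKernel μ k) (hb : ∀ z, b z = ∫ y, k z y ∂μ) (hbB : ∀ z, b z ≤ B)
    (x : α) : Integrable (fun y => (B - b y) * F x y) μ :=
  (hF.integrable x).bdd_mul (c := B)
    (measurable_const.sub (hk.measurable_of_eq_integral hb)).aestronglyMeasurable
    (.of_forall fun y => by
      have := hk.nonneg_of_eq_integral hb y
      rw [Real.norm_of_nonneg (sub_nonneg.2 (hbB y))]
      linarith)

theorem integrable_prod_mul [SFinite μ] (hF : IsNonnegIntegrableKernel μ F)
    (hk : IsNonnegIntegrableKernel μ k) (hb : ∀ z, b z = ∫ y, k z y ∂μ) (hbB : ∀ z, b z ≤ B)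
    (x : α) : Integrable (uncurry fun z y => F x z * k z y) (μ.prod μ) := by
  have hmeas : Measurable (uncurry fun z y => F x z * k z y) :=
    (hF.measurable.comp (measurable_const.prodMk measurable_fst)).mul hk.measurable
  refine (integrable_prod_iff hmeas.aestronglyMeasurable).2
    ⟨.of_forall fun z => (hk.integrable z).const_mul (F x z), ?_⟩
  have hnorm : (fun z => ∫ y, ‖F x z * k z y‖ ∂μ) = fun z => b z * F x z := by
    funext z
    have hnn : ∀ y, ‖F x z * k z y‖ = F x z * k z y :=
      fun y => Real.norm_of_nonneg (mul_nonneg (hF.nonneg x z) (hk.nonneg z y))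
    simp only [hnn]
    rw [integral_const_mul, hb, mul_comm]
  simp only [uncurry_apply_pair]
  rw [hnorm]
  exact hF.integrable_mul_left hk hb hbB x

theorem integrable_integral_mul [SigmaFinite μ] (hF : IsNonnegIntegrableKernel μ F)
    (hk : IsNonnegIntegrableKernel μ k) (hb : ∀ z, b z = ∫ y, k z y ∂μ) (hbB : ∀ z, b z ≤ B)
    (x : α) : Integrable (fun y => ∫ z, F x z * k z y ∂μ) μ :=
  (hF.integrable_prod_mul hk hb hbB x).integral_prod_right

theorem integral_integral_mul [SigmaFinite μ] (hF : IsNonnegIntegrableKernel μ F)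
    (hk : IsNonnegIntegrableKernel μ k) (hb : ∀ z, b z = ∫ y, k z y ∂μ) (hbB : ∀ z, b z ≤ B)
    (x : α) : ∫ y, ∫ z, F x z * k z y ∂μ ∂μ = ∫ z, b z * F x z ∂μ := by
  rw [← integral_integral_swap (hF.integrable_prod_mul hk hb hbB x)]
  refine integral_congr_ae (.of_forall fun z => ?_)
  simp only [integral_const_mul, ← hb, mul_comm]

theorem of_recursion [SigmaFinite μ] (hF : IsNonnegIntegrableKernel μ F)
    (hk : IsNonnegIntegrableKernel μ k) (hb : ∀ z, b z = ∫ y, k z y ∂μ) (hbB : ∀ z, b z ≤ B)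
    (hc : Measurable c) (hc0 : ∀ x, 0 ≤ c x)
    (hG : ∀ x y, G x y = (∫ z, F x z * k z y ∂μ) + (B - b y) * F x y + c x * k x y) :
    IsNonnegIntegrableKernel μ G where
  measurable := by
    have hint : Measurable fun p : α × α => ∫ z, F p.1 z * k z p.2 ∂μ :=
      ((hF.measurable.comp (measurable_fst.fst.prodMk measurable_snd)).mul
        (hk.measurable.comp (measurable_snd.prodMk measurable_fst.snd))).stronglyMeasurable
        |>.integral_prod_right'.measurable
    have hbm := hk.measurable_of_eq_integral hb
    rw [show uncurry G = _ from funext fun p => hG p.1 p.2]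
    exact (hint.add ((measurable_const.sub (hbm.comp measurable_snd)).mul hF.measurable)).add
      ((hc.comp measurable_fst).mul hk.measurable)
  nonneg x y := by
    rw [hG]
    have : 0 ≤ ∫ z, F x z * k z y ∂μ :=
      integral_nonneg fun z => mul_nonneg (hF.nonneg x z) (hk.nonneg z y)
    have := mul_nonneg (sub_nonneg.2 (hbB y)) (hF.nonneg x y)
    have := mul_nonneg (hc0 x) (hk.nonneg x y)
    positivity
  integrable x := by
    rw [show G x = _ from funext (hG x)]
    exact ((hF.integrable_integral_mul hk hb hbB x).add (hF.integrable_sub_mul hk hb hbB x)).add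
      ((hk.integrable x).const_mul (c x))

theorem integral_of_recursion [SigmaFinite μ] (hF : IsNonnegIntegrableKernel μ F)
    (hk : IsNonnegIntegrableKernel μ k) (hb : ∀ z, b z = ∫ y, k z y ∂μ) (hbB : ∀ z, b z ≤ B)
    (hG : ∀ x y, G x y = (∫ z, F x z * k z y ∂μ) + (B - b y) * F x y + c x * k x y) (x : α) :
    ∫ y, G x y ∂μ = B * ∫ y, F x y ∂μ + c x * b x := by
  have hI := hF.integrable_integral_mul hk hb hbB x
  have hS := hF.integrable_sub_mul hk hb hbB x
  have hIS : Integrable (fun y => (∫ z, F x z * k z y ∂μ) + (B - b y) * F x y) μ := hI.add hS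
  simp only [hG]
  rw [integral_add hIS ((hk.integrable x).const_mul (c x)), integral_add hI hS,
    hF.integral_integral_mul hk hb hbB x, integral_const_mul, ← hb]
  simp only [sub_mul]
  rw [integral_sub ((hF.integrable x).const_mul B) (hF.integrable_mul_left hk hb hbB x),
    integral_const_mul]
  ring

end IsNonnegIntegrableKernel

theorem IsNonnegIntegrableKernel.of_eq_ite_dist_gt {α : Type*} [PseudoMetricSpace α]
    [MeasurableSpace α] [OpensMeasurableSpace α] [SecondCountableTopology α] {μ : Measure α}
    {f g : α → α → ℝ} {ε : ℝ} (hf : Measurable (uncurry f)) (hf0 : ∀ x y, 0 ≤ f x y)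
    (hg : ∀ x y, g x y = if dist y x > ε then f x y else 0) (hgi : ∀ x, Integrable (g x) μ) :
    IsNonnegIntegrableKernel μ g where
  measurable := by
    rw [show uncurry g = _ from funext fun p => hg p.1 p.2]
    exact Measurable.ite (measurableSet_lt measurable_const (measurable_snd.dist measurable_fst))
      hf measurable_const
  nonneg x y := by
    rw [hg]
    split_ifs
    exacts [hf0 x y, le_rfl]
  integrable := hgi

theorem stmt_9_general (d : ℕ) (ε : ℝ)
    (f : EuclideanSpace ℝ (Fin d) → EuclideanSpace ℝ (Fin d) → ℝ)
    (hf0 : ∀ x y, 0 ≤ f x y) (hfmeas : Measurable (Function.uncurry f))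
    (fε : EuclideanSpace ℝ (Fin d) → EuclideanSpace ℝ (Fin d) → ℝ)
    (hfε : ∀ x y, fε x y = if dist y x > ε then f x y else 0)
    (bε : EuclideanSpace ℝ (Fin d) → ℝ)
    (hbε : ∀ x, bε x = ∫ y, fε x y)
    (hint : ∀ x, Integrable (fε x))
    (bbar : ℝ) (hbbar : ∀ x, bε x ≤ bbar)
    (F : ℕ → EuclideanSpace ℝ (Fin d) → EuclideanSpace ℝ (Fin d) → ℝ)
    (hF1 : F 1 = fε)
    (hFrec : ∀ n : ℕ, 1 ≤ n → ∀ x y,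
      F (n + 1) x y = (∫ z, F n x z * fε z y) + (bbar - bε y) * F n x y
        + (bbar - bε x) ^ n * fε x y) :
    ∀ n : ℕ, 1 ≤ n → ∀ x,
      (∫ y, F n x y) = bbar ^ n - (bbar - bε x) ^ n := by
  have hk := IsNonnegIntegrableKernel.of_eq_ite_dist_gt hfmeas hf0 hfε hint
  have hc : ∀ n : ℕ, Measurable fun x => (bbar - bε x) ^ n := fun n =>
    (measurable_const.sub (hk.measurable_of_eq_integral hbε)).pow_const n
  have hc0 : ∀ (n : ℕ) x, 0 ≤ (bbar - bε x) ^ n := fun n x =>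
    pow_nonneg (sub_nonneg.2 (hbbar x)) n
  suffices ∀ n, 1 ≤ n → IsNonnegIntegrableKernel volume (F n) ∧
      ∀ x, ∫ y, F n x y = bbar ^ n - (bbar - bε x) ^ n from fun n hn => (this n hn).2
  refine Nat.le_induction ⟨hF1 ▸ hk, fun x => by rw [hF1, ← hbε]; ring⟩ ?_
  rintro n hn ⟨hFn, hIn⟩
  refine ⟨hFn.of_recursion hk hbε hbbar (hc n) (hc0 n) (hFrec n hn), fun x => ?_⟩
  rw [hFn.integral_of_recursion hk hbε hbbar (hFrec n hn), hIn]
  ring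

theorem stmt_9 (d : ℕ) (hd : 1 ≤ d) (ε : ℝ) (hε : 0 < ε)
    (f : EuclideanSpace ℝ (Fin d) → EuclideanSpace ℝ (Fin d) → ℝ)
    (hf0 : ∀ x y, 0 ≤ f x y) (hfmeas : Measurable (Function.uncurry f))
    (fε : EuclideanSpace ℝ (Fin d) → EuclideanSpace ℝ (Fin d) → ℝ)
    (hfε : ∀ x y, fε x y = if dist y x > ε then f x y else 0)
    (bε : EuclideanSpace ℝ (Fin d) → ℝ)
    (hbε : ∀ x, bε x = ∫ y, fε x y)
    (hint : ∀ x, Integrable (fε x))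
    (bbar : ℝ) (hbbar : ∀ x, bε x ≤ bbar)
    (F : ℕ → EuclideanSpace ℝ (Fin d) → EuclideanSpace ℝ (Fin d) → ℝ)
    (hF1 : F 1 = fε)
    (hFrec : ∀ n : ℕ, 1 ≤ n → ∀ x y,
      F (n + 1) x y = (∫ z, F n x z * fε z y) + (bbar - bε y) * F n x y
        + (bbar - bε x) ^ n * fε x y) :
    ∀ n : ℕ, 1 ≤ n → ∀ x,
      (∫ y, F n x y) = bbar ^ n - (bbar - bε x) ^ n :=
  stmt_9_general d ε f hf0 hfmeas fε hfε bε hbε hint bbar hbbar F hF1 hFrec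
end

section
/- For every p ∈ [0,∞) there exists a constant C = C(p) such that ∑_{n=1}^∞ x^{n+p} / (n! n^p) ≤ C (e^x − 1) for all x > 0. -/
/-!
Write `t = x / (n + 1)` and fix an integer `k ≥ p`. The `n`-th term is
`x ^ (n + 1) / (n + 1)! * t ^ p ≤ x ^ (n + 1) / (n + 1)! * (1 + t ^ k)`, and the second summand
is at most `(k + 1)! * x ^ (n + k + 1) / (n + k + 1)!` because
`(n + k + 1)! / n! = (n + 1) ⋯ (n + k + 1) ≤ (k + 1)! * (n + 1) ^ (k + 1)`.
Both resulting series are tails of the exponential series without its constant term, so the sum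
is at most `(1 + (k + 1)!) * (exp x - 1)`.
-/

open Nat Real

lemma Nat.factorial_add_succ_le (n k : ℕ) :
    (n + (k + 1))! ≤ (k + 1)! * (n + 1)! * (n + 1) ^ k := by
  calc (n + (k + 1))! = n ! * (n + 1).ascFactorial (k + 1) :=
        (Nat.factorial_mul_ascFactorial n (k + 1)).symm
    _ ≤ n ! * ((k + 1)! * (n + 1) ^ (k + 1)) :=
        Nat.mul_le_mul_left _ (Nat.ascFactorial_le_factorial_mul_pow _ _)
    _ = (k + 1)! * (n + 1)! * (n + 1) ^ k := by rw [Nat.factorial_succ n]; ring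

lemma Real.rpow_le_one_add_rpow {t p q : ℝ} (ht : 0 ≤ t) (hp : 0 ≤ p) (hpq : p ≤ q) :
    t ^ p ≤ 1 + t ^ q := by
  rcases le_or_gt t 1 with h | h
  · linarith [rpow_le_one ht h hp, rpow_nonneg ht q]
  · linarith [rpow_le_rpow_of_exponent_le h.le hpq, rpow_nonneg ht q]

lemma Real.summable_pow_div_factorial_add (x : ℝ) (j : ℕ) :
    Summable fun n : ℕ => x ^ (n + j) / (n + j)! :=
  (summable_nat_add_iff j).2 (summable_pow_div_factorial x)

lemma Real.tsum_pow_div_factorial_add_le {x : ℝ} (hx : 0 ≤ x) {j : ℕ} (hj : 1 ≤ j) :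
    ∑' n : ℕ, x ^ (n + j) / (n + j)! ≤ exp x - 1 := by
  have hexp : ∑' n : ℕ, x ^ n / n ! = exp x := by
    rw [exp_eq_exp_ℝ]; exact (NormedSpace.expSeries_div_hasSum_exp x).tsum_eq
  have hhead : 1 ≤ ∑ i ∈ Finset.range j, x ^ i / i ! := by
    simpa using Finset.single_le_sum (f := fun i => x ^ i / (i ! : ℝ))
      (fun i _ => by positivity) (Finset.mem_range.2 hj)
  linarith [(summable_pow_div_factorial x).sum_add_tsum_nat_add j]

lemma pow_div_factorial_mul_pow_le {x : ℝ} (hx : 0 ≤ x) (n k : ℕ) :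
    x ^ (n + 1) / (n + 1)! * (x / (n + 1)) ^ k
      ≤ (k + 1)! * (x ^ (n + (k + 1)) / (n + (k + 1))!) := by
  have hfac : ((n + (k + 1))! : ℝ) ≤ (k + 1)! * (n + 1)! * ((n : ℝ) + 1) ^ k := by
    exact_mod_cast Nat.factorial_add_succ_le n k
  calc x ^ (n + 1) / (n + 1)! * (x / (n + 1)) ^ k
      = x ^ (n + (k + 1)) / ((n + 1)! * ((n : ℝ) + 1) ^ k) := by
        rw [div_pow]; field_simp; ring
    _ ≤ (k + 1)! * x ^ (n + (k + 1)) / (n + (k + 1))! := by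
        rw [div_le_div_iff₀ (by positivity) (by positivity)]
        linear_combination (x ^ (n + (k + 1))) * hfac
    _ = _ := mul_div_assoc _ _ _

lemma rpow_add_div_factorial_mul_rpow_le {x p : ℝ} (hx : 0 < x) (hp : 0 ≤ p) {k : ℕ}
    (hpk : p ≤ k) (n : ℕ) :
    x ^ (((n : ℝ) + 1) + p) / ((n + 1)! * ((n : ℝ) + 1) ^ p)
      ≤ x ^ (n + 1) / (n + 1)! + (k + 1)! * (x ^ (n + (k + 1)) / (n + (k + 1))!) := by
  have hsplit : x ^ (((n : ℝ) + 1) + p) / ((n + 1)! * ((n : ℝ) + 1) ^ p)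
      = x ^ (n + 1) / (n + 1)! * (x / (n + 1)) ^ p := by
    rw [rpow_add hx, div_rpow hx.le (by positivity)]
    norm_cast
    field_simp
  have hratio := rpow_le_one_add_rpow (div_nonneg hx.le (by positivity : (0:ℝ) ≤ n + 1)) hp hpk
  rw [rpow_natCast] at hratio
  calc _ = x ^ (n + 1) / (n + 1)! * (x / (n + 1)) ^ p := hsplit
    _ ≤ x ^ (n + 1) / (n + 1)! * (1 + (x / (n + 1)) ^ k) := by gcongr
    _ = x ^ (n + 1) / (n + 1)! + x ^ (n + 1) / (n + 1)! * (x / (n + 1)) ^ k := by ring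
    _ ≤ _ := add_le_add le_rfl (pow_div_factorial_mul_pow_le hx.le n k)

theorem stmt_11 (p : ℝ) (hp : 0 ≤ p) :
    ∃ C : ℝ, ∀ x : ℝ, 0 < x →
      ∑' n : ℕ, x ^ (((n : ℝ) + 1) + p) / ((Nat.factorial (n + 1)) * ((n : ℝ) + 1) ^ p)
        ≤ C * (Real.exp x - 1) := by
  obtain ⟨k, hpk⟩ := exists_nat_ge p
  refine ⟨1 + (k + 1)!, fun x hx => ?_⟩
  have hterm := rpow_add_div_factorial_mul_rpow_le hx hp hpk
  have hbound := (summable_pow_div_factorial_add x 1).add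
    ((summable_pow_div_factorial_add x (k + 1)).mul_left ((k + 1)! : ℝ))
  calc _ ≤ ∑' n : ℕ,
          (x ^ (n + 1) / (n + 1)! + (k + 1)! * (x ^ (n + (k + 1)) / (n + (k + 1))!)) :=
        (hbound.of_nonneg_of_le (fun n => by positivity) hterm).tsum_le_tsum hterm hbound
    _ = ∑' n : ℕ, x ^ (n + 1) / (n + 1)!
          + (k + 1)! * ∑' n : ℕ, x ^ (n + (k + 1)) / (n + (k + 1))! := by
        rw [(summable_pow_div_factorial_add x 1).tsum_add
          ((summable_pow_div_factorial_add x (k + 1)).mul_left _), tsum_mul_left]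
    _ ≤ (exp x - 1) + (k + 1)! * (exp x - 1) := by
        gcongr
        · exact tsum_pow_div_factorial_add_le hx.le le_rfl
        · exact tsum_pow_div_factorial_add_le hx.le (by omega)
    _ = _ := by ring
end

section
/- Let φ : [0,∞) → (0,1] with φ = 1 on [0,1], φ ∈ C²(1,∞), satisfying: (a) φ(a) ≤ c₁ φ(b) whenever |a-b| ≤ 1, and (b) max(|φ'(a)|, |φ''(a)|) ≤ c₂ φ(a) for a > 1. Let η(z) = φ(|z-x|)|z-x|^{-α-d}. Then there is a constant C (depending on c₁, c₂, α, d) such that for all y with |y - x| > 2, the first and second partial derivatives of η on B(y,1) are bounded in absolute value by C η(y). -/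
/-!
Write `η z = f ‖z - x‖` with `f s = φ s * s ^ (-α - d)`. For `s > 1` the bounds on `φ'`, `φ''`
and `s ^ (q - 1) ≤ s ^ q` give `|f'|, |f''| ≤ K f`. For a radial function the first partial
derivatives are bounded by `|f'(r)|` and the second ones by `|f''(r)| + 2 |f'(r)| / r`, where
`r = ‖z - x‖`; so on `r > 1` both are at most `3 K f(r)`. Finally, for `‖z - y‖ < 1` and
`R = ‖y - x‖ > 2` we have `|r - R| ≤ 1` and `R ≤ 2 r`, whence `f(r) ≤ c₁ 2 ^ (α + d) f(R)`.
-/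

open Metric Real
open scoped RealInnerProductSpace

theorem ContDiffOn.hasDerivAt_deriv_deriv {f : ℝ → ℝ} {s : Set ℝ} (hf : ContDiffOn ℝ 2 f s)
    (hs : IsOpen s) {t : ℝ} (ht : t ∈ s) :
    HasDerivAt f (deriv f t) t ∧ HasDerivAt (deriv f) (deriv (deriv f) t) t :=
  ⟨((hf.differentiableOn two_ne_zero t ht).differentiableAt (hs.mem_nhds ht)).hasDerivAt,
    (((hf.deriv_of_isOpen (m := 1) hs (by norm_num)).differentiableOn one_ne_zero t
      ht).differentiableAt (hs.mem_nhds ht)).hasDerivAt⟩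

theorem hasDerivAt_comp_sqrt {f f₁ : ℝ → ℝ} {t : ℝ} (ht : 0 < t)
    (hf : HasDerivAt f (f₁ √t) √t) :
    HasDerivAt (fun t => f √t) (f₁ √t / (2 * √t)) t :=
  (hf.comp t (hasDerivAt_sqrt ht.ne')).congr_deriv (by ring)

theorem hasDerivAt_div_two_sqrt {f₁ f₂ : ℝ → ℝ} {t : ℝ} (ht : 0 < t)
    (hf₁ : HasDerivAt f₁ (f₂ √t) √t) :
    HasDerivAt (fun t => f₁ √t / (2 * √t)) ((f₂ √t - f₁ √t / √t) / (4 * t)) t := by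
  have hsqrt : 0 < √t := sqrt_pos.mpr ht
  refine ((hasDerivAt_comp_sqrt ht hf₁).div ((hasDerivAt_sqrt ht.ne').const_mul 2)
    (by positivity)).congr_deriv ?_
  rw [mul_pow, sq_sqrt ht.le]
  field_simp
  ring

theorem exists_hasDerivAt_mul_rpow_abs_le {φ φ' φ'' : ℝ → ℝ} {c p : ℝ} (hc : 0 ≤ c)
    (hφ : ∀ s, 1 < s → HasDerivAt φ (φ' s) s) (hφ' : ∀ s, 1 < s → HasDerivAt φ' (φ'' s) s)
    (hφ0 : ∀ s, 1 < s → 0 ≤ φ s) (hφ'le : ∀ s, 1 < s → |φ' s| ≤ c * φ s)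
    (hφ''le : ∀ s, 1 < s → |φ'' s| ≤ c * φ s) :
    ∃ f₁ f₂ : ℝ → ℝ, ∀ s, 1 < s →
      HasDerivAt (fun s => φ s * s ^ p) (f₁ s) s ∧ HasDerivAt f₁ (f₂ s) s ∧
      |f₁ s| ≤ (1 + c) * (1 + |p|) ^ 2 * (φ s * s ^ p) ∧
      |f₂ s| ≤ (1 + c) * (1 + |p|) ^ 2 * (φ s * s ^ p) := by
  refine ⟨fun s => φ' s * s ^ p + φ s * (p * s ^ (p - 1)),
    fun s => φ'' s * s ^ p + 2 * φ' s * (p * s ^ (p - 1)) + φ s * (p * (p - 1) * s ^ (p - 2)),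
    fun s hs => ⟨?_, ?_, ?_⟩⟩
  · exact (hφ s hs).mul (hasDerivAt_rpow_const (Or.inl (by positivity)))
  · have hrpow : ∀ q, HasDerivAt (fun s : ℝ => s ^ q) (q * s ^ (q - 1)) s :=
      fun q => hasDerivAt_rpow_const (Or.inl (by positivity))
    refine (((hφ' s hs).mul (hrpow p)).add
      ((hφ s hs).mul ((hrpow (p - 1)).const_mul p))).congr_deriv ?_
    rw [show p - 1 - 1 = p - 2 by ring]
    ring
  have hs0 : 0 < s := by linarith
  have hφs : |φ s| ≤ φ s := (abs_of_nonneg (hφ0 s hs)).le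
  have hpow : ∀ q ≤ p, |s ^ q| ≤ s ^ p := fun q hq => by
    rw [abs_of_pos (rpow_pos_of_pos hs0 q)]
    exact rpow_le_rpow_of_exponent_le hs.le hq
  have habs_mul : ∀ {A B a b : ℝ}, |A| ≤ a → |B| ≤ b → |A * B| ≤ a * b := fun hA hB => by
    rw [abs_mul]; exact mul_le_mul hA hB (abs_nonneg _) ((abs_nonneg _).trans hA)
  have hp : |p| ≤ |p| := le_rfl
  have hp1 : |p - 1| ≤ |p| + 1 := by simpa using abs_sub p 1
  have h₁ := habs_mul (hφ'le s hs) (hpow p le_rfl)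
  have h₂ := habs_mul hφs (habs_mul hp (hpow (p - 1) (by linarith)))
  have h₃ := habs_mul (hφ''le s hs) (hpow p le_rfl)
  have h₄ := habs_mul (habs_mul (show |2| ≤ 2 by norm_num) (hφ'le s hs))
    (habs_mul hp (hpow (p - 1) (by linarith)))
  have h₅ := habs_mul hφs (habs_mul (habs_mul hp hp1) (hpow (p - 2) (by linarith)))
  have hP : 0 ≤ φ s * s ^ p := mul_nonneg (hφ0 s hs) (rpow_nonneg hs0.le p)
  have hcp : 0 ≤ c * |p| := mul_nonneg hc (abs_nonneg p)
  constructor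
  · calc _ ≤ _ := abs_add_le _ _
      _ ≤ (c + |p|) * (φ s * s ^ p) := by linarith
      _ ≤ _ := by gcongr; nlinarith [abs_nonneg p]
  · calc _ ≤ _ := abs_add_three _ _ _
      _ ≤ (c + 2 * c * |p| + |p| * (|p| + 1)) * (φ s * s ^ p) := by linarith
      _ ≤ _ := by gcongr; nlinarith [abs_nonneg p]

theorem rpow_le_two_rpow_neg_mul_rpow {p r R : ℝ} (hp : p ≤ 0) (hR : 0 < R) (hr : R ≤ 2 * r) :
    r ^ p ≤ 2 ^ (-p) * R ^ p := by
  calc r ^ p ≤ (R / 2) ^ p := rpow_le_rpow_of_nonpos (by positivity) (by linarith) hp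
    _ = 2 ^ (-p) * R ^ p := by
      rw [div_rpow hR.le zero_le_two, rpow_neg zero_le_two, div_eq_inv_mul]

theorem mul_rpow_le_of_abs_sub_le {φ : ℝ → ℝ} {c p r R : ℝ} (hp : p ≤ 0) (hR : 2 ≤ R)
    (hrR : |r - R| ≤ 1) (hφ : φ r ≤ c * φ R) (hφR : 0 ≤ c * φ R) :
    φ r * r ^ p ≤ c * 2 ^ (-p) * (φ R * R ^ p) := by
  have hr : R ≤ 2 * r := by linarith [(abs_le.mp hrR).1]
  calc φ r * r ^ p ≤ (c * φ R) * (2 ^ (-p) * R ^ p) :=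
        mul_le_mul hφ (rpow_le_two_rpow_neg_mul_rpow hp (by linarith) hr)
          (rpow_nonneg (by linarith) p) hφR
    _ = c * 2 ^ (-p) * (φ R * R ^ p) := by ring

section Radial

variable {E : Type*} [NormedAddCommGroup E] [InnerProductSpace ℝ E] {x z : E}

theorem hasFDerivAt_comp_norm_sub_sq {G : ℝ → ℝ} {g : ℝ} (hG : HasDerivAt G g (‖z - x‖ ^ 2)) :
    HasFDerivAt (fun w => G (‖w - x‖ ^ 2)) (g • (2 • innerSL ℝ (z - x))) z :=
  hG.comp_hasFDerivAt z (by simpa using ((hasFDerivAt_id z).sub_const x).norm_sq)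

theorem fderiv_comp_norm_sub_sq_apply {G : ℝ → ℝ} {g : ℝ} (hG : HasDerivAt G g (‖z - x‖ ^ 2))
    (v : E) : fderiv ℝ (fun w => G (‖w - x‖ ^ 2)) z v = g * (2 * ⟪z - x, v⟫) := by
  rw [(hasFDerivAt_comp_norm_sub_sq hG).fderiv]
  simp only [smul_apply, innerSL_apply_apply, smul_eq_mul, nsmul_eq_mul, Nat.cast_ofNat]

theorem fderiv_fderiv_comp_norm_sub_sq_apply {G G₁ G₂ : ℝ → ℝ} {b : ℝ}
    (hG : ∀ t, b < t → HasDerivAt G (G₁ t) t) (hG₁ : ∀ t, b < t → HasDerivAt G₁ (G₂ t) t)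
    (hz : b < ‖z - x‖ ^ 2) (u v : E) :
    fderiv ℝ (fun w => fderiv ℝ (fun w => G (‖w - x‖ ^ 2)) w v) z u =
      G₂ (‖z - x‖ ^ 2) * (2 * ⟪z - x, v⟫) * (2 * ⟪z - x, u⟫) +
        G₁ (‖z - x‖ ^ 2) * (2 * ⟪v, u⟫) := by
  have hopen : IsOpen {w : E | b < ‖w - x‖ ^ 2} :=
    isOpen_lt continuous_const ((continuous_id.sub continuous_const).norm.pow 2)
  have hev : (fun w => fderiv ℝ (fun w => G (‖w - x‖ ^ 2)) w v) =ᶠ[nhds z]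
      fun w => G₁ (‖w - x‖ ^ 2) * (2 * ⟪w - x, v⟫) := by
    filter_upwards [hopen.mem_nhds hz] with w hw
    exact fderiv_comp_norm_sub_sq_apply (hG _ hw) v
  have hinner : HasFDerivAt (fun w => 2 * ⟪w - x, v⟫) ((2 : ℝ) • innerSL ℝ v) z := by
    have := ((innerSL ℝ v).hasFDerivAt.comp z ((hasFDerivAt_id z).sub_const x)).const_mul (2 : ℝ)
    simpa [real_inner_comm v] using this
  have hprod : HasFDerivAt (fun w => G₁ (‖w - x‖ ^ 2) * (2 * ⟪w - x, v⟫)) _ z :=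
    (hasFDerivAt_comp_norm_sub_sq (hG₁ _ hz)).mul hinner
  rw [hev.fderiv_eq, hprod.fderiv]
  simp only [add_apply, smul_apply, innerSL_apply_apply, smul_eq_mul, nsmul_eq_mul,
    Nat.cast_ofNat]
  ring

theorem abs_fderiv_comp_norm_sub_le {f f₁ f₂ : ℝ → ℝ} {a : ℝ} (ha : 0 ≤ a)
    (hf : ∀ s, a < s → HasDerivAt f (f₁ s) s) (hf₁ : ∀ s, a < s → HasDerivAt f₁ (f₂ s) s)
    (hz : a < ‖z - x‖) {u v : E} (hu : ‖u‖ ≤ 1) (hv : ‖v‖ ≤ 1) :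
    |fderiv ℝ (fun w => f ‖w - x‖) z v| ≤ |f₁ ‖z - x‖| ∧
      |fderiv ℝ (fun w => fderiv ℝ (fun w => f ‖w - x‖) w v) z u| ≤
        |f₂ ‖z - x‖| + 2 * |f₁ ‖z - x‖| / ‖z - x‖ := by
  -- Going through `t ↦ f √t` at `t = ‖w - x‖ ^ 2` avoids differentiating the norm itself.
  have hsq : (fun w => f ‖w - x‖) = fun w => (fun t => f √t) (‖w - x‖ ^ 2) := by
    funext w
    simp only [sqrt_sq (norm_nonneg _)]
  have hsqrt : ∀ t, a ^ 2 < t → a < √t := fun t ht => (lt_sqrt ha).mpr ht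
  have hG : ∀ t, a ^ 2 < t → HasDerivAt (fun t => f √t) (f₁ √t / (2 * √t)) t :=
    fun t ht => hasDerivAt_comp_sqrt (by nlinarith) (hf _ (hsqrt t ht))
  have hG₁ : ∀ t, a ^ 2 < t →
      HasDerivAt (fun t => f₁ √t / (2 * √t)) ((f₂ √t - f₁ √t / √t) / (4 * t)) t :=
    fun t ht => hasDerivAt_div_two_sqrt (by nlinarith) (hf₁ _ (hsqrt t ht))
  have hz2 : a ^ 2 < ‖z - x‖ ^ 2 := pow_lt_pow_left₀ hz ha two_ne_zero
  rw [hsq, fderiv_comp_norm_sub_sq_apply (hG _ hz2),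
    fderiv_fderiv_comp_norm_sub_sq_apply hG hG₁ hz2, sqrt_sq (norm_nonneg _)]
  set r := ‖z - x‖
  have hr : 0 < r := ha.trans_lt hz
  have hunit : ∀ {w : E}, ‖w‖ ≤ 1 → |⟪z - x, w⟫ / r| ≤ 1 := fun hw => by
    rw [abs_div, abs_of_pos hr, div_le_one hr]
    exact (abs_real_inner_le_norm _ _).trans (mul_le_of_le_one_right hr.le hw)
  have hvu : |⟪v, u⟫| ≤ 1 :=
    (abs_real_inner_le_norm _ _).trans (mul_le_one₀ hv (norm_nonneg _) hu)
  constructor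
  · calc |f₁ r / (2 * r) * (2 * ⟪z - x, v⟫)| = |f₁ r| * |⟪z - x, v⟫ / r| := by
          rw [← abs_mul]; congr 1; field_simp
      _ ≤ |f₁ r| := mul_le_of_le_one_right (abs_nonneg _) (hunit hv)
  · calc |(f₂ r - f₁ r / r) / (4 * r ^ 2) * (2 * ⟪z - x, v⟫) * (2 * ⟪z - x, u⟫) +
          f₁ r / (2 * r) * (2 * ⟪v, u⟫)|
        = |(f₂ r - f₁ r / r) * ((⟪z - x, v⟫ / r) * (⟪z - x, u⟫ / r)) + f₁ r / r * ⟪v, u⟫| := by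
          congr 1; field_simp; ring
      _ ≤ |f₂ r - f₁ r / r| * 1 + |f₁ r / r| * 1 := by
          refine (abs_add_le _ _).trans ?_
          rw [abs_mul, abs_mul, abs_mul]
          gcongr
          exact mul_le_one₀ (hunit hv) (abs_nonneg _) (hunit hu)
      _ ≤ |f₂ r| + 2 * |f₁ r| / r := by
          have := abs_sub (f₂ r) (f₁ r / r)
          rw [abs_div, abs_of_pos hr] at this ⊢
          linarith [show 2 * |f₁ r| / r = |f₁ r| / r + |f₁ r| / r by ring]

end Radial

theorem stmt_13_general (d : ℕ) (α : ℝ) (hα : 0 < α)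
    (φ : ℝ → ℝ) (c₁ c₂ : ℝ) (hc₁ : 0 < c₁) (hc₂ : 0 < c₂)
    (hφpos : ∀ s, 0 ≤ s → 0 < φ s)
    (hφC2 : ContDiffOn ℝ 2 φ (Set.Ioi (1 : ℝ)))
    (hφa : ∀ a b : ℝ, 0 ≤ a → 0 ≤ b → |a - b| ≤ 1 → φ a ≤ c₁ * φ b)
    (hφb : ∀ a : ℝ, 1 < a → max |deriv φ a| |deriv (deriv φ) a| ≤ c₂ * φ a)
    (x : EuclideanSpace ℝ (Fin d))
    (η : EuclideanSpace ℝ (Fin d) → ℝ)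
    (hη : ∀ z, η z = φ ‖z - x‖ * ‖z - x‖ ^ (-α - d)) :
    ∃ C : ℝ, 0 < C ∧ ∀ y : EuclideanSpace ℝ (Fin d), dist y x > 2 →
      ∀ z ∈ ball y 1, ∀ j k : Fin d,
        |fderiv ℝ η z (EuclideanSpace.single j (1:ℝ))| ≤ C * η y ∧
        |fderiv ℝ (fun w => fderiv ℝ η w (EuclideanSpace.single j (1:ℝ))) z
            (EuclideanSpace.single k (1:ℝ))| ≤ C * η y := by
  set p : ℝ := -α - d
  have hp : p ≤ 0 := by linarith [d.cast_nonneg (α := ℝ)]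
  obtain ⟨f₁, f₂, hf⟩ := exists_hasDerivAt_mul_rpow_abs_le (p := p) hc₂.le
    (fun s hs => (hφC2.hasDerivAt_deriv_deriv isOpen_Ioi hs).1)
    (fun s hs => (hφC2.hasDerivAt_deriv_deriv isOpen_Ioi hs).2)
    (fun s hs => (hφpos s (by linarith)).le) (fun s hs => (le_max_left _ _).trans (hφb s hs))
    (fun s hs => (le_max_right _ _).trans (hφb s hs))
  set K := (1 + c₂) * (1 + |p|) ^ 2
  refine ⟨3 * K * (c₁ * 2 ^ (-p)), by positivity, fun y hy z hz j k => ?_⟩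
  set R := ‖y - x‖
  set r := ‖z - x‖ with hr_def
  have hrR : |r - R| ≤ 1 := by
    simpa only [dist_eq_norm] using (abs_dist_sub_le z y x).trans (mem_ball.mp hz).le
  rw [dist_eq_norm] at hy
  have hr : 1 < r := by linarith [(abs_le.mp hrR).1]
  have hcomp : φ r * r ^ p ≤ c₁ * 2 ^ (-p) * η y := by
    rw [hη]
    exact mul_rpow_le_of_abs_sub_le hp hy.le hrR (hφa _ _ (by linarith) (norm_nonneg _) hrR)
      (mul_nonneg hc₁.le (hφpos R (norm_nonneg _)).le)
  obtain ⟨-, -, hf₁, hf₂⟩ := hf r hr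
  obtain ⟨h₁, h₂⟩ := abs_fderiv_comp_norm_sub_le zero_le_one (fun s hs => (hf s hs).1)
    (fun s hs => (hf s hs).2.1) hr (u := EuclideanSpace.single k 1)
    (v := EuclideanSpace.single j 1) (by simp) (by simp)
  rw [show (fun w => φ ‖w - x‖ * ‖w - x‖ ^ p) = η from (funext hη).symm, ← hr_def] at h₁ h₂
  have hKP : 0 ≤ K * (φ r * r ^ p) := (abs_nonneg _).trans hf₁
  have hf₁r : 2 * |f₁ r| / r ≤ 2 * |f₁ r| := div_le_self (by positivity) hr.le
  have hC : 3 * K * (φ r * r ^ p) ≤ 3 * K * (c₁ * 2 ^ (-p)) * η y := by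
    rw [mul_assoc _ (c₁ * _)]
    gcongr
  exact ⟨by linarith, by linarith⟩

theorem stmt_13 (d : ℕ) (hd : 1 ≤ d) (α : ℝ) (hα : 0 < α) (hα2 : α < 2)
    (φ : ℝ → ℝ) (c₁ c₂ : ℝ) (hc₁ : 0 < c₁) (hc₂ : 0 < c₂)
    (hφpos : ∀ s, 0 ≤ s → 0 < φ s) (hφle : ∀ s, 0 ≤ s → φ s ≤ 1)
    (hφ1 : ∀ s, 0 ≤ s → s ≤ 1 → φ s = 1)
    (hφC2 : ContDiffOn ℝ 2 φ (Set.Ioi (1 : ℝ)))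
    (hφa : ∀ a b : ℝ, 0 ≤ a → 0 ≤ b → |a - b| ≤ 1 → φ a ≤ c₁ * φ b)
    (hφb : ∀ a : ℝ, 1 < a → max |deriv φ a| |deriv (deriv φ) a| ≤ c₂ * φ a)
    (x : EuclideanSpace ℝ (Fin d))
    (η : EuclideanSpace ℝ (Fin d) → ℝ)
    (hη : ∀ z, η z = φ ‖z - x‖ * ‖z - x‖ ^ (-α - d)) :
    ∃ C : ℝ, 0 < C ∧ ∀ y : EuclideanSpace ℝ (Fin d), dist y x > 2 →
      ∀ z ∈ ball y 1, ∀ j k : Fin d,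
        |fderiv ℝ η z (EuclideanSpace.single j (1:ℝ))| ≤ C * η y ∧
        |fderiv ℝ (fun w => fderiv ℝ η w (EuclideanSpace.single j (1:ℝ))) z
            (EuclideanSpace.single k (1:ℝ))| ≤ C * η y :=
  stmt_13_general d α hα φ c₁ c₂ hc₁ hc₂ hφpos hφC2 hφa hφb x η hη
end
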